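/- arXiv:2009.11302 — 2 statements merged into one kernel-verified Lean document; each statement's English description precedes it below -/
import Mathlib

section
/- If Φ is a trace-preserving positive linear map on trace-class operators that maps F into F, then R(Φ(ρ)) ≤ R(ρ) for all states ρ. -/
noncomputable section
open scoped ENNReal ComplexOrder
open Filter

variable {H : Type} [NormedAddCommGroup H] [InnerProductSpace ℂ H] [CompleteSpace H]

local notation "⟪" x ", " y "⟫" => @inner ℂ _ _ x y

/-- Bounded operators on `H`. -/
abbrev Op (H : Type) [NormedAddCommGroup H] [InnerProductSpace ℂ H] : Type := H →L[ℂ] H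

/-- The rank-one projector `|ψ⟩⟨ψ|`. -/
def projv (ψ : H) : Op H := (innerSL ℂ ψ).smulRight ψ

/-- The trace of an operator with respect to a Hilbert basis. -/
def trB {ι : Type} (e : HilbertBasis ι ℂ H) (T : Op H) : ℂ := ∑' n, ⟪e n, T (e n)⟫

/-- A density operator: positive, trace-class (summable diagonal), unit trace. -/
def IsDensity {ι : Type} (e : HilbertBasis ι ℂ H) (ρ : Op H) : Prop :=
  ρ.IsPositive ∧ Summable (fun n => (⟪e n, ρ (e n)⟫).re) ∧ trB e ρ = 1

/-- The trace norm `Tr |T| = Tr √(T†T)`. -/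
def traceNorm {ι : Type} (e : HilbertBasis ι ℂ H) (T : Op H) : ℝ :=
  ∑' n, (⟪e n, (CFC.sqrt (ContinuousLinearMap.adjoint T ∘L T)) (e n)⟫).re

/-- Sequential closure of a set of operators in the trace norm. -/
def tnClosure {ι : Type} (e : HilbertBasis ι ℂ H) (S : Set (Op H)) : Set (Op H) :=
  {T | ∃ u : ℕ → Op H, (∀ k, u k ∈ S) ∧
    Tendsto (fun k => traceNorm e (u k - T)) atTop (nhds 0)}

/-- The generalized robustness `R_F(ρ) = inf {1 + λ | (ρ + λτ)/(1+λ) ∈ F, τ a density operator}`. -/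
def Robustness {ι : Type} (e : HilbertBasis ι ℂ H) (F : Set (Op H)) (ρ : Op H) : ℝ≥0∞ :=
  sInf {r : ℝ≥0∞ | ∃ lam : ℝ, 0 ≤ lam ∧ ∃ τ : Op H, IsDensity e τ ∧
    ((1 + lam)⁻¹ : ℝ) • (ρ + lam • τ) ∈ F ∧ r = ENNReal.ofReal (1 + lam)}

set_option synthInstance.maxHeartbeats 1000000 in
set_option maxHeartbeats 1000000 in
/-- monotonicity of the robustness under trace-preserving positive free maps. -/
theorem robustness_monotone {ι : Type} (e : HilbertBasis ι ℂ H) (F : Set (Op H))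
    (hF : ∀ σ ∈ F, IsDensity e σ) (hconv : Convex ℝ F) (hcl : tnClosure e F ⊆ F)
    (Φ : Op H →ₗ[ℂ] Op H)
    (hpos : ∀ T : Op H, T.IsPositive → (Φ T).IsPositive)
    (hTP : ∀ ρ : Op H, IsDensity e ρ → IsDensity e (Φ ρ))
    (hfree : ∀ σ ∈ F, Φ σ ∈ F)
    (ρ : Op H) (hρ : IsDensity e ρ) :
    Robustness e F (Φ ρ) ≤ Robustness e F ρ := by
  apply sInf_le_sInf
  rintro r ⟨lam, hlam, τ, hτ, hmem, hr⟩
  refine ⟨lam, hlam, Φ τ, hTP τ hτ, ?_, hr⟩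
  have := hfree _ hmem
  simpa [map_add, LinearMap.map_smul_of_tower] using this
end
end

section
/- For the even cat state |α₊⟩ ∝ |α⟩ + |−α⟩ with α ≥ 0, the generalized robustness of nonclassicality satisfies R_C(α₊) ≤ 2(1 + e^{-2α²})^{-1}. -/
noncomputable section
open scoped ENNReal ComplexOrder
open Filter

variable {H : Type} [NormedAddCommGroup H] [InnerProductSpace ℂ H] [CompleteSpace H]

local notation "⟪" x ", " y "⟫" => @inner ℂ _ _ x y

/-- The coherent state `|α⟩ = e^{-|α|²/2} ∑ₘ (αᵐ/√m!) |m⟩` in the Fock basis `e`. -/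
def coh (e : HilbertBasis ℕ ℂ H) (α : ℂ) : H :=
  ∑' m : ℕ, (Complex.exp (-((‖α‖ : ℂ) ^ 2 / 2)) * α ^ m / (Real.sqrt (Nat.factorial m) : ℂ)) • e m

/-- The classical states: the trace-norm closed convex hull of coherent state projectors. -/
def ClassicalStates (e : HilbertBasis ℕ ℂ H) : Set (Op H) :=
  tnClosure e (convexHull ℝ {T : Op H | ∃ α : ℂ, T = projv (coh e α)})

/-- The even cat state `|α₊⟩ = (|α⟩ + |-α⟩)/√(2(1 + e^{-2α²}))`. -/
def catPlus (e : HilbertBasis ℕ ℂ H) (α : ℝ) : H :=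
  (((Real.sqrt (2 * (1 + Real.exp (-2 * α ^ 2))))⁻¹ : ℝ) : ℂ) •
    (coh e (α : ℂ) + coh e (-(α : ℂ)))

/-! Put `u = |α⟩`, `v = |-α⟩`: unit vectors with real overlap `s = ⟨α|-α⟩ = e^{-2α²}`, and
`|α₊⟩ = (u + v)/√(2(1 + s))`. By the parallelogram identity
`|u + v⟩⟨u + v| + |u - v⟩⟨u - v| = 2 (|u⟩⟨u| + |v⟩⟨v|)`, mixing the cat state with weight
`λ = (1 - s)/(1 + s)` of the odd cat state `(u - v)/√(2(1 - s))` yields the classical state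
`½ |α⟩⟨α| + ½ |-α⟩⟨-α|`, so `R_C(α₊) ≤ 1 + λ = 2/(1 + s)`. -/

open ComplexConjugate

section

variable {E : Type} [NormedAddCommGroup E] [InnerProductSpace ℂ E]

lemma isPositive_projv (ψ : E) : (projv ψ).IsPositive :=
  InnerProductSpace.isPositive_rankOne_self ψ

lemma isDensity_projv {ι : Type} (e : HilbertBasis ι ℂ E) {ψ : E} (hψ : ‖ψ‖ = 1) :
    IsDensity e (projv ψ) := by
  have h : HasSum (fun n => ⟪e n, projv ψ (e n)⟫) 1 := by
    rw [← one_pow 2, ← RCLike.ofReal_one, ← hψ, ← inner_self_eq_norm_sq_to_K]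
    simpa only [projv, ContinuousLinearMap.smulRight_apply, innerSL_apply_apply, inner_smul_right,
      mul_comm] using e.hasSum_inner_mul_inner ψ ψ
  exact ⟨isPositive_projv ψ, (Complex.hasSum_re h).summable, h.tsum_eq⟩

lemma projv_ofReal_smul (c : ℝ) (ψ : E) : projv ((c : ℂ) • ψ) = (c ^ 2) • projv ψ := by
  ext x
  simp only [projv, ContinuousLinearMap.smulRight_apply, innerSL_apply_apply, inner_smul_left,
    Complex.conj_ofReal, smul_apply, smul_smul, ← Complex.coe_smul]
  push_cast
  ring_nf

lemma projv_add_add_projv_sub (u v : E) :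
    projv (u + v) + projv (u - v) = (2 : ℝ) • (projv u + projv v) := by
  ext x
  simp only [projv, add_apply, ContinuousLinearMap.smulRight_apply,
    innerSL_apply_apply, inner_add_left, inner_sub_left, smul_apply]
  module

lemma norm_sub_sq_of_norm_eq_one {u v : E} {s : ℝ} (hu : ‖u‖ = 1) (hv : ‖v‖ = 1)
    (huv : ⟪u, v⟫ = s) : ‖u - v‖ ^ 2 = 2 * (1 - s) := by
  rw [@norm_sub_sq ℂ, hu, hv, huv, RCLike.re_to_complex, Complex.ofReal_re]
  ring

lemma robustness_le_ofReal {ι : Type} (e : HilbertBasis ι ℂ E) {F : Set (Op E)} {ρ τ : Op E}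
    {lam : ℝ} (hlam : 0 ≤ lam) (hτ : IsDensity e τ)
    (hmem : ((1 + lam)⁻¹ : ℝ) • (ρ + lam • τ) ∈ F) :
    Robustness e F ρ ≤ ENNReal.ofReal (1 + lam) :=
  sInf_le ⟨lam, hlam, τ, hτ, hmem, rfl⟩

theorem robustness_projv_normalized_add_le {ι : Type} (e : HilbertBasis ι ℂ E) {F : Set (Op E)}
    {u v : E} {s : ℝ} (hu : ‖u‖ = 1) (hv : ‖v‖ = 1) (huv : ⟪u, v⟫ = s) (hs : -1 < s)
    (hF : (1 / 2 : ℝ) • projv u + (1 / 2 : ℝ) • projv v ∈ F) :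
    Robustness e F (projv ((((Real.sqrt (2 * (1 + s)))⁻¹ : ℝ) : ℂ) • (u + v))) ≤
      ENNReal.ofReal (2 * (1 + s)⁻¹) := by
  have hsub := norm_sub_sq_of_norm_eq_one hu hv huv
  have hs1 : s ≤ 1 := by nlinarith [sq_nonneg ‖u - v‖]
  obtain ⟨τ, hτ, hlamτ⟩ : ∃ τ, IsDensity e τ ∧
      ((1 - s) / (1 + s)) • τ = (2 * (1 + s))⁻¹ • projv (u - v) := by
    rcases hs1.eq_or_lt with rfl | hs1
    · refine ⟨projv u, isDensity_projv e hu, ?_⟩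
      have : u - v = 0 := by simpa using hsub
      simp [this, projv]
    · have hpos : 0 < 2 * (1 - s) := by linarith
      refine ⟨projv ((((Real.sqrt (2 * (1 - s)))⁻¹ : ℝ) : ℂ) • (u - v)), isDensity_projv e ?_, ?_⟩
      · rw [norm_smul, Complex.norm_real, Real.norm_eq_abs, ← Real.sqrt_sq (norm_nonneg (u - v)),
          hsub, abs_of_pos (inv_pos.mpr (Real.sqrt_pos.mpr hpos)),
          inv_mul_cancel₀ (Real.sqrt_pos.mpr hpos).ne']
      · rw [projv_ofReal_smul, inv_pow, Real.sq_sqrt hpos.le, smul_smul]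
        congr 1
        field_simp
  have h1s : 1 + s ≠ 0 := by linarith
  have hlam : 0 ≤ (1 - s) / (1 + s) := div_nonneg (by linarith) (by linarith)
  refine (robustness_le_ofReal e hlam hτ ?_).trans_eq ?_
  · rw [hlamτ, projv_ofReal_smul, inv_pow, Real.sq_sqrt (by linarith), ← smul_add,
      projv_add_add_projv_sub, smul_smul, smul_smul, smul_add]
    convert hF using 2 <;> congr 1 <;> field_simp <;> ring
  · congr 1
    field_simp
    ring

def cohCoeff (α : ℂ) (m : ℕ) : ℂ :=
  Complex.exp (-((‖α‖ : ℂ) ^ 2 / 2)) * α ^ m / (Real.sqrt (Nat.factorial m) : ℂ)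

lemma conj_cohCoeff_mul_cohCoeff (α β : ℂ) (m : ℕ) :
    conj (cohCoeff α m) * cohCoeff β m =
      Complex.exp (-((‖α‖ : ℂ) ^ 2 / 2) - (‖β‖ : ℂ) ^ 2 / 2) *
        ((conj α * β) ^ m / m.factorial) := by
  have hfac : (Real.sqrt m.factorial : ℂ) * Real.sqrt m.factorial = m.factorial := by
    rw [← Complex.ofReal_mul, Real.mul_self_sqrt (by positivity), Complex.ofReal_natCast]
  simp only [cohCoeff, map_div₀, map_mul, map_pow, ← Complex.exp_conj, map_neg, Complex.conj_ofReal,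
    map_ofNat, sub_eq_add_neg, Complex.exp_add, mul_pow, ← hfac]
  field_simp

lemma hasSum_conj_cohCoeff_mul_cohCoeff (α β : ℂ) :
    HasSum (fun m => conj (cohCoeff α m) * cohCoeff β m)
      (Complex.exp (-((‖α‖ : ℂ) ^ 2 / 2) - (‖β‖ : ℂ) ^ 2 / 2 + conj α * β)) := by
  simp only [conj_cohCoeff_mul_cohCoeff, Complex.exp_add]
  refine HasSum.mul_left _ ?_
  rw [Complex.exp_eq_exp_ℂ]
  exact NormedSpace.expSeries_div_hasSum_exp _

lemma memℓp_cohCoeff (α : ℂ) : Memℓp (cohCoeff α) 2 := by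
  refine memℓp_gen ?_
  have h := Complex.hasSum_re (hasSum_conj_cohCoeff_mul_cohCoeff α α)
  simp only [Complex.conj_mul', ← Complex.ofReal_pow, Complex.ofReal_re] at h
  simpa using h.summable

lemma coh_eq_repr_symm (e : HilbertBasis ℕ ℂ E) (α : ℂ) :
    coh e α = e.repr.symm ⟨cohCoeff α, memℓp_cohCoeff α⟩ :=
  (e.hasSum_repr_symm ⟨cohCoeff α, memℓp_cohCoeff α⟩).tsum_eq

lemma inner_basis_coh (e : HilbertBasis ℕ ℂ E) (α : ℂ) (n : ℕ) :
    ⟪e n, coh e α⟫ = cohCoeff α n := by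
  rw [coh_eq_repr_symm, ← e.repr_apply_apply, LinearIsometryEquiv.apply_symm_apply]

lemma inner_coh_coh (e : HilbertBasis ℕ ℂ E) (α β : ℂ) :
    ⟪coh e α, coh e β⟫ =
      Complex.exp (-((‖α‖ : ℂ) ^ 2 / 2) - (‖β‖ : ℂ) ^ 2 / 2 + conj α * β) := by
  refine (e.hasSum_inner_mul_inner _ _).unique ?_
  simpa only [← inner_conj_symm (coh e α), inner_basis_coh] using
    hasSum_conj_cohCoeff_mul_cohCoeff α β

lemma norm_coh (e : HilbertBasis ℕ ℂ E) (α : ℂ) : ‖coh e α‖ = 1 := by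
  have h : ⟪coh e α, coh e α⟫ = 1 := by
    rw [inner_coh_coh, Complex.conj_mul', ← Complex.exp_zero]
    ring_nf
  have h2 : ‖coh e α‖ ^ 2 = 1 := by rw [← inner_self_eq_norm_sq (𝕜 := ℂ), h, RCLike.one_re]
  exact (pow_eq_one_iff_of_nonneg (norm_nonneg _) two_ne_zero).mp h2

lemma inner_coh_ofReal_neg (e : HilbertBasis ℕ ℂ E) (a : ℝ) :
    ⟪coh e (a : ℂ), coh e (-(a : ℂ))⟫ = (Real.exp (-2 * a ^ 2) : ℂ) := by
  rw [inner_coh_coh, norm_neg, Complex.norm_real, Real.norm_eq_abs, ← Complex.ofReal_pow, sq_abs,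
    Complex.conj_ofReal, Complex.ofReal_exp]
  push_cast
  ring_nf

end

lemma traceNorm_zero {ι : Type} (e : HilbertBasis ι ℂ H) : traceNorm e (0 : Op H) = 0 := by
  simp [traceNorm]

lemma subset_tnClosure {ι : Type} (e : HilbertBasis ι ℂ H) (S : Set (Op H)) :
    S ⊆ tnClosure e S :=
  fun T hT => ⟨fun _ => T, fun _ => hT, by simp [traceNorm_zero]⟩

lemma half_projv_coh_add_half_projv_coh_mem_classicalStates (e : HilbertBasis ℕ ℂ H) (β γ : ℂ) :
    (1 / 2 : ℝ) • projv (coh e β) + (1 / 2 : ℝ) • projv (coh e γ) ∈ ClassicalStates e :=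
  subset_tnClosure e _ <| convex_convexHull ℝ _
    (subset_convexHull ℝ {T : Op H | ∃ α : ℂ, T = projv (coh e α)} ⟨β, rfl⟩)
    (subset_convexHull ℝ _ ⟨γ, rfl⟩) (by norm_num) (by norm_num) (by norm_num)

theorem robustness_nonclassicality_cat_upper_general (e : HilbertBasis ℕ ℂ H) (α : ℝ) :
    Robustness e (ClassicalStates e) (projv (catPlus e α)) ≤
      ENNReal.ofReal (2 * (1 + Real.exp (-2 * α ^ 2))⁻¹) :=
  robustness_projv_normalized_add_le e (norm_coh e _) (norm_coh e _) (inner_coh_ofReal_neg e α)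
    (by linarith [Real.exp_pos (-2 * α ^ 2)])
    (half_projv_coh_add_half_projv_coh_mem_classicalStates e _ _)

/-- `R_C(α₊) ≤ 2(1 + e^{-2α²})⁻¹` for the even cat state with `α ≥ 0`. -/
theorem robustness_nonclassicality_cat_upper (e : HilbertBasis ℕ ℂ H) (α : ℝ) (hα : 0 ≤ α) :
    Robustness e (ClassicalStates e) (projv (catPlus e α)) ≤
      ENNReal.ofReal (2 * (1 + Real.exp (-2 * α ^ 2))⁻¹) :=
  robustness_nonclassicality_cat_upper_general e α
end
end
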